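/- The group PSL(3,2) (equivalently PSL(2,7)), of order 168, is minimal non-solvable: it is not solvable, but every proper subgroup is solvable. -/

import Mathlib

/-!
Since the centre of `SL(3, 2)` is trivial and every invertible matrix over `𝔽₂` has determinant
one, `PSL(3, 2) ≅ SL(3, 2) ≅ GL(3, 2)` has order `7 · 6 · 4 = 168`. In `SL(n, R)` with `n ≥ 3`
every transvection `1 + c Eᵢⱼ` is the commutator of `1 + c Eᵢₖ` and `1 + Eₖⱼ`, and over `𝔽₂`
the transvections generate, so `PSL(3, 2)` is perfect and nontrivial, hence not solvable.

A proper subgroup has order a proper divisor of `168 = 2³ · 3 · 7`, and every group of such an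
order `n` is solvable. Prime powers are nilpotent. Otherwise `n = p m` with `p ∈ {3, 7}`, `p ∤ m`, and
the Sylow theorems leave only three possible numbers of Sylow `p`-subgroups: one (it is normal),
`m` (it is self-normalizing and cyclic, so Burnside's transfer theorem gives a normal
`p`-complement), or four (conjugation maps `G` to `S₄` with kernel inside a normalizer).
-/

universe u

open scoped commutatorElement

namespace Matrix.SpecialLinearGroup

variable {ι R : Type*} [Fintype ι] [DecidableEq ι] [CommRing R]

theorem transvection_eq_commutator {i j k : ι} (hij : i ≠ j) (hik : i ≠ k) (hkj : k ≠ j) (c : R) :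
    transvection hij c = ⁅transvection hik c, transvection hkj 1⁆ := by
  rw [commutatorElement_def, transvection_inv, transvection_inv]
  refine Subtype.ext ?_
  simp only [transvection_coe, coe_mul, mul_add, mul_one, add_mul, one_mul, single_mul_single_same,
    single_mul_single_of_ne _ _ _ _ hij.symm, single_mul_single_of_ne _ _ _ _ hik.symm,
    single_mul_single_of_ne _ _ _ _ hkj.symm, add_zero, mul_neg, neg_neg]
  simp only [← single_neg]
  abel

theorem transvection_mem_commutator (h : 3 ≤ Fintype.card ι) {i j : ι} (hij : i ≠ j) (c : R) :
    transvection hij c ∈ commutator (SpecialLinearGroup ι R) := by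
  obtain ⟨k, hki, hkj⟩ := ENat.exists_ne_ne_of_three_le (by simpa using h) i j
  rw [transvection_eq_commutator hij hki.symm hkj]
  exact Subgroup.commutator_mem_commutator (Subgroup.mem_top _) (Subgroup.mem_top _)

theorem isPerfect_zmod_two (h : 3 ≤ Fintype.card ι) :
    Group.IsPerfect (SpecialLinearGroup ι (ZMod 2)) := by
  have : Nontrivial ι := Fintype.one_lt_card_iff_nontrivial.mp (by omega)
  refine Group.isPerfect_def.mpr (eq_top_iff.mpr fun A _ ↦ ?_)
  refine diagonal_transvection_induction' (· ∈ commutator _) A (fun i j hij c hc ↦ ?_)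
    (fun _ _ hij c ↦ transvection_mem_commutator h hij c) fun _ _ ↦ mul_mem
  obtain rfl : c = 1 := by revert c; decide
  convert one_mem (commutator (SpecialLinearGroup ι (ZMod 2)))
  ext : 2
  simp [diag2n_coe]

theorem center_eq_bot_zmod_two : Subgroup.center (SpecialLinearGroup ι (ZMod 2)) = ⊥ :=
  have := (center_equiv_rootsOfUnity (n := ι) (R := ZMod 2)).toEquiv.subsingleton
  Subgroup.eq_bot_of_subsingleton _

theorem card_eq_card_GL_zmod_two :
    Nat.card (SpecialLinearGroup ι (ZMod 2)) = Nat.card (GL ι (ZMod 2)) := by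
  refine Nat.card_congr (MulEquiv.ofBijective toGL ⟨toGL_injective, fun u ↦ ?_⟩).toEquiv
  refine ⟨⟨u, ?_⟩, Units.ext rfl⟩
  rw [← GeneralLinearGroup.val_det_apply, Subsingleton.elim (GeneralLinearGroup.det u) 1,
    Units.val_one]

end Matrix.SpecialLinearGroup

theorem Matrix.ProjectiveSpecialLinearGroup.card_fin_three_zmod_two :
    Nat.card (ProjectiveSpecialLinearGroup (Fin 3) (ZMod 2)) = 168 := by
  have h := Subgroup.card_eq_card_quotient_mul_card_subgroup
    (Subgroup.center (SpecialLinearGroup (Fin 3) (ZMod 2)))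
  rw [Subgroup.card_eq_one.mpr SpecialLinearGroup.center_eq_bot_zmod_two, mul_one,
    SpecialLinearGroup.card_eq_card_GL_zmod_two, card_GL_field] at h
  rw [ProjectiveSpecialLinearGroup, ← h]
  simp [Fin.prod_univ_three]

theorem IsPGroup.isSolvable {G : Type*} [Group G] [Finite G] {p : ℕ} [Fact p.Prime]
    (hG : IsPGroup p G) : Group.IsSolvable G :=
  have := hG.isNilpotent
  inferInstance

def IsSolvableNumber (n : ℕ) : Prop :=
  ∀ (G : Type u) [Group G], Nat.card G = n → Group.IsSolvable G

theorem isSolvableNumber_prime_pow {p : ℕ} (hp : p.Prime) (k : ℕ) :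
    IsSolvableNumber.{u} (p ^ k) := by
  intro G _ hG
  have : Fact p.Prime := ⟨hp⟩
  have : Finite G := Nat.finite_of_card_ne_zero (hG ▸ pow_ne_zero k hp.ne_zero)
  exact (IsPGroup.of_card hG).isSolvable

theorem Equiv.Perm.isSolvable_of_card_eq_four {α : Type*} [Finite α] (h : Nat.card α = 4) :
    Group.IsSolvable (Equiv.Perm α) := by
  classical
  have := Fintype.ofFinite α
  have : Nontrivial α := Finite.one_lt_card_iff_nontrivial.mp (by omega)
  have := alternatingGroup.normal_kleinFour h
  refine (Group.isSolvable_iff_subgroup_quotient (alternatingGroup α)).mpr ⟨?_, ?_⟩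
  · refine (Group.isSolvable_iff_subgroup_quotient (alternatingGroup.kleinFour α)).mpr ⟨?_, ?_⟩
    · exact isSolvableNumber_prime_pow Nat.prime_two 2 _
        (alternatingGroup.kleinFour_card_of_card_eq_four h)
    · refine isSolvableNumber_prime_pow Nat.prime_three 1 _ ?_
      have hA : Nat.card (alternatingGroup α) = 12 := by rw [nat_card_alternatingGroup, h]; rfl
      have hV := (alternatingGroup.kleinFour α).card_mul_index
      rw [alternatingGroup.kleinFour_card_of_card_eq_four h, hA, Subgroup.index_eq_card] at hV
      omega
  · refine isSolvableNumber_prime_pow Nat.prime_two 1 _ ?_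
    rw [← Subgroup.index_eq_card, alternatingGroup.index_eq_two, pow_one]

theorem isSolvable_of_isSolvable_stabilizer_of_card_eq_four {G X : Type*} [Group G]
    [MulAction G X] [Finite X] (hX : Nat.card X = 4) (x : X)
    (hx : Group.IsSolvable (MulAction.stabilizer G x)) : Group.IsSolvable G := by
  let φ := MulAction.toPermHom G X
  have hker : φ.ker ≤ MulAction.stabilizer G x := fun g hg ↦ by
    simpa [φ] using congr($hg x)
  have := Equiv.Perm.isSolvable_of_card_eq_four hX
  refine (Group.isSolvable_iff_subgroup_quotient φ.ker).mpr ⟨?_, ?_⟩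
  · exact Group.isSolvable_of_isSolvable_injective (Subgroup.inclusion_injective hker)
  · exact Group.isSolvable_of_isSolvable_injective (QuotientGroup.kerLift_injective φ)

namespace Sylow
variable {G : Type u} [Group G] [Finite G] {p : ℕ} [Fact p.Prime]

theorem card_eq_of_card_eq_pow_mul (P : Sylow p G) {k m : ℕ} (hG : Nat.card G = p ^ k * m)
    (hm : ¬ p ∣ m) : Nat.card P = p ^ k := by
  have hp : p.Prime := Fact.out
  have hm0 : m ≠ 0 := by rintro rfl; exact hm (dvd_zero p)
  rw [P.card_eq_multiplicity, hG, Nat.factorization_mul (pow_ne_zero k hp.ne_zero) hm0,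
    Finsupp.add_apply, hp.factorization_pow, Finsupp.single_eq_same,
    Nat.factorization_eq_zero_of_not_dvd hm, add_zero]

theorem index_eq_of_card_eq_pow_mul (P : Sylow p G) {k m : ℕ} (hG : Nat.card G = p ^ k * m)
    (hm : ¬ p ∣ m) : (P : Subgroup G).index = m := by
  have h := (P : Subgroup G).card_mul_index
  rw [hG, show Nat.card (P : Subgroup G) = p ^ k from P.card_eq_of_card_eq_pow_mul hG hm] at h
  exact Nat.eq_of_mul_eq_mul_left (pow_pos (Fact.out : p.Prime).pos k) h

theorem isSolvable_of_normal (P : Sylow p G) [(P : Subgroup G).Normal]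
    (h : IsSolvableNumber.{u} (P : Subgroup G).index) : Group.IsSolvable G :=
  (Group.isSolvable_iff_subgroup_quotient (P : Subgroup G)).mpr
    ⟨P.isPGroup'.isSolvable, h _ (Subgroup.index_eq_card _).symm⟩

theorem isSolvable_of_normalizer_le_centralizer (P : Sylow p G)
    (hP : Subgroup.normalizer (P : Set G) ≤ Subgroup.centralizer (P : Set G))
    (h : IsSolvableNumber.{u} (P : Subgroup G).index) : Group.IsSolvable G := by
  let K := (MonoidHom.transferSylow P hP).ker
  have hK : Nat.card K = (P : Subgroup G).index :=
    (MonoidHom.ker_transferSylow_isComplement' P hP).index_eq_card.symm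
  have := P.isPGroup'.isSolvable
  refine (Group.isSolvable_iff_subgroup_quotient K).mpr ⟨h _ hK, ?_⟩
  exact Group.isSolvable_of_isSolvable_injective (QuotientGroup.kerLift_injective _)

end Sylow

theorem isSolvableNumber_prime_mul {p m : ℕ} (hp : p.Prime) (hm : ¬ p ∣ m)
    (h : IsSolvableNumber.{u} m)
    (hsyl : ∀ d ∈ m.divisors, d % p = 1 → d = 1 ∨ d = m ∨ d = 4)
    -- `p * (m / 4)` is the order of a Sylow normalizer when there are four Sylow `p`-subgroups.
    (h4 : 4 ∣ m → 4 % p = 1 → IsSolvableNumber.{u} (p * (m / 4))) :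
    IsSolvableNumber.{u} (p * m) := by
  intro G _ hG
  have : Fact p.Prime := ⟨hp⟩
  have hm0 : m ≠ 0 := by rintro rfl; exact hm (dvd_zero p)
  have : Finite G := Nat.finite_of_card_ne_zero (hG ▸ mul_ne_zero hp.ne_zero hm0)
  obtain ⟨P⟩ : Nonempty (Sylow p G) := inferInstance
  have hG' : Nat.card G = p ^ 1 * m := by rw [hG, pow_one]
  have hPcard : Nat.card P = p := by simpa using P.card_eq_of_card_eq_pow_mul hG' hm
  have hP : (P : Subgroup G).index = m := P.index_eq_of_card_eq_pow_mul hG' hm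
  have hcount : Nat.card (Sylow p G) ∈ m.divisors :=
    Nat.mem_divisors.mpr ⟨hP ▸ P.card_dvd_index, hm0⟩
  have hmod : Nat.card (Sylow p G) % p = 1 :=
    Eq.trans (card_sylow_modEq_one p G) (Nat.mod_eq_of_lt hp.one_lt)
  rcases hsyl _ hcount hmod with hone | hself | hfour
  · have : Subsingleton (Sylow p G) := (Nat.card_eq_one_iff_unique.mp hone).1
    have := P.normal_of_subsingleton
    exact P.isSolvable_of_normal (hP ▸ h)
  · have hN : Subgroup.normalizer (P : Set G) ≤ P := by
      rw [← Subgroup.relIndex_eq_one]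
      have := Subgroup.relIndex_mul_index (H := P) (K := Subgroup.normalizer (P : Set G))
        Subgroup.le_normalizer
      rw [← P.card_eq_index_normalizer, hself, hP] at this
      exact (Nat.mul_eq_right hm0).mp this
    have : IsCyclic P := isCyclic_of_prime_card hPcard
    exact P.isSolvable_of_normalizer_le_centralizer
      (hN.trans (Subgroup.le_centralizer _)) (hP ▸ h)
  · have h4m : 4 ∣ m := hfour ▸ Nat.dvd_of_mem_divisors hcount
    refine isSolvable_of_isSolvable_stabilizer_of_card_eq_four hfour P ?_
    rw [Sylow.stabilizer_eq_normalizer]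
    refine h4 h4m (hfour ▸ hmod) _ ?_
    have := (Subgroup.normalizer (P : Set G)).card_mul_index
    rw [← P.card_eq_index_normalizer, hfour, hG] at this
    rw [← Nat.mul_div_assoc p h4m, ← this, Nat.mul_div_cancel _ (by norm_num)]

theorem isSolvableNumber_of_dvd_of_lt {n : ℕ} (hn : n ∣ 168) (hlt : n < 168) :
    IsSolvableNumber.{u} n := by
  have h1 : IsSolvableNumber.{u} 1 := isSolvableNumber_prime_pow Nat.prime_two 0
  have h2 : IsSolvableNumber.{u} 2 := isSolvableNumber_prime_pow Nat.prime_two 1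
  have h4 : IsSolvableNumber.{u} 4 := isSolvableNumber_prime_pow Nat.prime_two 2
  have h8 : IsSolvableNumber.{u} 8 := isSolvableNumber_prime_pow Nat.prime_two 3
  have h3 : IsSolvableNumber.{u} 3 := isSolvableNumber_prime_pow Nat.prime_three 1
  have h7 : IsSolvableNumber.{u} 7 := isSolvableNumber_prime_pow (p := 7) (by norm_num) 1
  have h6 : IsSolvableNumber.{u} 6 :=
    isSolvableNumber_prime_mul Nat.prime_three (by norm_num) h2 (by decide) (by norm_num)
  have h12 : IsSolvableNumber.{u} 12 :=
    isSolvableNumber_prime_mul Nat.prime_three (by norm_num) h4 (by decide) fun _ _ ↦ h3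
  have h24 : IsSolvableNumber.{u} 24 :=
    isSolvableNumber_prime_mul Nat.prime_three (by norm_num) h8 (by decide) fun _ _ ↦ h6
  have h7_mul {m : ℕ} (h : IsSolvableNumber.{u} m) (hm : ¬ 7 ∣ m)
      (hsyl : ∀ d ∈ m.divisors, d % 7 = 1 → d = 1 ∨ d = m ∨ d = 4) :
      IsSolvableNumber.{u} (7 * m) :=
    isSolvableNumber_prime_mul (by norm_num) hm h hsyl (by norm_num)
  have h14 : IsSolvableNumber.{u} 14 := h7_mul h2 (by norm_num) (by decide)
  have h21 : IsSolvableNumber.{u} 21 := h7_mul h3 (by norm_num) (by decide)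
  have h28 : IsSolvableNumber.{u} 28 := h7_mul h4 (by norm_num) (by decide)
  have h42 : IsSolvableNumber.{u} 42 := h7_mul h6 (by norm_num) (by decide)
  have h56 : IsSolvableNumber.{u} 56 := h7_mul h8 (by norm_num) (by decide)
  have h84 : IsSolvableNumber.{u} 84 := h7_mul h12 (by norm_num) (by decide)
  have hdiv : n ∈ (Nat.divisors 168).erase 168 :=
    Finset.mem_erase.mpr ⟨hlt.ne, Nat.mem_divisors.mpr ⟨hn, by norm_num⟩⟩
  rw [show (Nat.divisors 168).erase 168 = {1, 2, 3, 4, 6, 7, 8, 12, 14, 21, 24, 28, 42, 56, 84}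
    by decide] at hdiv
  simp only [Finset.mem_insert, Finset.mem_singleton] at hdiv
  rcases hdiv with
    rfl | rfl | rfl | rfl | rfl | rfl | rfl | rfl | rfl | rfl | rfl | rfl | rfl | rfl | rfl <;>
    assumption

theorem PSL32_mns :
    Nat.card (Matrix.ProjectiveSpecialLinearGroup (Fin 3) (ZMod 2)) = 168 ∧
    ¬ IsSolvable (Matrix.ProjectiveSpecialLinearGroup (Fin 3) (ZMod 2)) ∧
    ∀ H : Subgroup (Matrix.ProjectiveSpecialLinearGroup (Fin 3) (ZMod 2)),
      H ≠ ⊤ → IsSolvable H := by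
  have hcard := Matrix.ProjectiveSpecialLinearGroup.card_fin_three_zmod_two
  have : Group.IsPerfect (Matrix.SpecialLinearGroup (Fin 3) (ZMod 2)) :=
    Matrix.SpecialLinearGroup.isPerfect_zmod_two (by simp)
  refine ⟨hcard, Group.IsPerfect.not_isSolvable _, fun H hH ↦ ?_⟩
  have : Finite (Matrix.ProjectiveSpecialLinearGroup (Fin 3) (ZMod 2)) :=
    Nat.finite_of_card_ne_zero (by rw [hcard]; norm_num)
  have hdvd : Nat.card H ∣ 168 := hcard ▸ H.card_subgroup_dvd_card
  have hlt : Nat.card H < 168 :=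
    (Nat.le_of_dvd (by norm_num) hdvd).lt_of_ne (hcard ▸ mt H.card_eq_iff_eq_top.mp hH)
  exact isSolvableNumber_of_dvd_of_lt hdvd hlt H rfl
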